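/- Let h : B → B be the solenoid map and Λ = ∩_{k≥0} h^k(B) its maximal attractor. Let S¹ = ℝ/2ℤ, and let 𝒢 : B × S¹ → B × S¹ be a skew product 𝒢(b, x) = (h(b), g_b(x)), where each fiber map g_b is a homeomorphism of S¹, b ↦ g_b is continuous in the C⁰ topology, and there exist a closed arc I ⊂ S¹ and a constant l < 1 such that g_b(I) ⊆ I and the restriction of g_b to I is Lipschitz with constant l for every b ∈ B. Then A* = ∩_{k≥1} 𝒢^k(B × I) is the graph of a continuous function γ : Λ → I; moreover the projection p : A* → Λ, p(b,x) = b, is a homeomorphism satisfying p ∘ 𝒢 = h ∘ p on A*, so the restriction of 𝒢 to A* is topologically conjugate to the restriction of h to Λ. -/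

import Mathlib

open MeasureTheory Set Filter Topology Metric

instance : Fact ((0 : ℝ) < 2) := ⟨by norm_num⟩

/-- The circle `S¹ = ℝ/2ℤ`. -/
abbrev S1 := AddCircle (2 : ℝ)

/-- The base of the solenoid: the ambient space `(ℝ/ℤ) × ℂ`. -/
abbrev Base := AddCircle (1 : ℝ) × ℂ

/-- The solenoid map `h(y,z) = (2y, e^{2πiy} + λz)` (here `AddCircle.toCircle y = e^{2πiy}`). -/
noncomputable def solenoidMap (lam : ℝ) (b : Base) : Base :=
  (b.1 + b.1, (AddCircle.toCircle b.1 : ℂ) + lam * b.2)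

/-- The solid torus `B = (ℝ/ℤ) × D(R)`. -/
def solidTorus (R : ℝ) : Set Base := univ ×ˢ closedBall (0 : ℂ) R

/-- The Smale–Williams solenoid `Λ = ∩_{k≥0} h^k(B)`. -/
noncomputable def solenoidAttractor (lam R : ℝ) : Set Base :=
  ⋂ k : ℕ, (solenoidMap lam)^[k] '' solidTorus R

/-- The skew product `𝒢(b,x) = (h(b), g_b(x))` over the solenoid map. -/
noncomputable def skewSol (lam : ℝ) (g : Base → S1 ≃ₜ S1) (p : Base × S1) : Base × S1 :=
  (solenoidMap lam p.1, g p.1 p.2)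

/-- The maximal attractor `A* = ∩_{k≥1} 𝒢^k(B × I)`. -/
noncomputable def maxAttr (lam R : ℝ) (g : Base → S1 ≃ₜ S1) (I : Set S1) :
    Set (Base × S1) :=
  ⋂ k : ℕ, (skewSol lam g)^[k + 1] '' (solidTorus R ×ˢ I)

/-- `I` is a closed arc of `S¹`, the image of a closed interval of length `< 2`. -/
def IsClosedArc (I : Set S1) : Prop :=
  ∃ a b : ℝ, a ≤ b ∧ b - a < 2 ∧ I = (fun x : ℝ => ((x : ℝ) : S1)) '' Icc a b


/-! The solenoid map is injective on `B`, so `h` permutes `Λ` and `h|Λ` is a homeomorphism of a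
compact space. The graph transform `(Tγ)(b) = g_{h⁻¹b}(γ(h⁻¹b))` is then an `l`-contraction of the
complete space of continuous sections `Λ → I`; its fixed point `γ` is an invariant section.
Every point of `𝒢^{k+1}(B × I)` lies over `Λ` at fiber distance `≤ lᵏ⁺¹ · diam I` from the graph
of `γ`, because the fibers are contracted along the (unique) backward orbit in `Λ`; hence
`A*` is exactly that graph, which projects homeomorphically onto `Λ`. -/

open scoped NNReal

section MaximalAttractor

variable {α : Type*} {f : α → α} {S : Set α}

def maximalAttractor (f : α → α) (S : Set α) : Set α :=
  ⋂ k : ℕ, f^[k] '' S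

theorem maximalAttractor_subset : maximalAttractor f S ⊆ S := by
  simpa [maximalAttractor] using iInter_subset (fun k : ℕ => f^[k] '' S) 0

theorem mapsTo_maximalAttractor (hf : MapsTo f S S) :
    MapsTo f (maximalAttractor f S) (maximalAttractor f S) := by
  intro b hb
  simp only [maximalAttractor, mem_iInter] at hb ⊢
  intro k
  obtain ⟨a, ha, rfl⟩ := hb k
  exact ⟨f a, hf ha, by rw [← Function.iterate_succ_apply, Function.iterate_succ_apply']⟩

theorem surjOn_maximalAttractor (hf : MapsTo f S S) (hinj : InjOn f S) :
    SurjOn f (maximalAttractor f S) (maximalAttractor f S) := by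
  intro b hb
  simp only [maximalAttractor, mem_iInter] at hb
  have hpre : ∀ k, ∃ c ∈ f^[k] '' S, f c = b := fun k => by
    simpa only [Function.iterate_succ', image_comp, mem_image] using hb (k + 1)
  obtain ⟨c, hc, rfl⟩ := hpre 0
  refine ⟨c, mem_iInter.2 fun k => ?_, rfl⟩
  obtain ⟨c', hc', hc'c⟩ := hpre k
  rwa [← hinj ((hf.iterate k).image_subset hc') (by simpa using hc) hc'c]

theorem bijOn_maximalAttractor (hf : MapsTo f S S) (hinj : InjOn f S) :
    BijOn f (maximalAttractor f S) (maximalAttractor f S) :=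
  ⟨mapsTo_maximalAttractor hf, hinj.mono maximalAttractor_subset, surjOn_maximalAttractor hf hinj⟩

theorem mem_maximalAttractor_of_iterate_mem (hf : MapsTo f S S) (hinj : InjOn f S) {c : α}
    (hc : c ∈ S) {n : ℕ} (hn : f^[n] c ∈ maximalAttractor f S) : c ∈ maximalAttractor f S := by
  obtain ⟨c', hc', hc'c⟩ := (surjOn_maximalAttractor hf hinj).iterate n hn
  rwa [(hinj.iterate hf n) hc (maximalAttractor_subset hc') hc'c.symm]

theorem IsCompact.maximalAttractor [TopologicalSpace α] [T2Space α] (hS : IsCompact S)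
    (hf : Continuous f) : IsCompact (maximalAttractor f S) :=
  hS.of_isClosed_subset (isClosed_iInter fun k => (hS.image (hf.iterate k)).isClosed)
    maximalAttractor_subset

end MaximalAttractor

section SkewProduct

variable {α β : Type*} (f : α → α) (g : α → β → β)

def skewProduct (p : α × β) : α × β :=
  (f p.1, g p.1 p.2)

theorem skewProduct_iterate_fst (n : ℕ) (p : α × β) :
    ((skewProduct f g)^[n] p).1 = f^[n] p.1 := by
  induction n generalizing p with
  | zero => rfl
  | succ n ih => exact ih (skewProduct f g p)

variable {f g} {K : Set α} {γ : α → β}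

theorem skewProduct_iterate_graph (hK : MapsTo f K K)
    (hγ : ∀ b ∈ K, γ (f b) = g b (γ b)) (n : ℕ) {b : α} (hb : b ∈ K) :
    (skewProduct f g)^[n] (b, γ b) = (f^[n] b, γ (f^[n] b)) := by
  induction n generalizing b with
  | zero => rfl
  | succ n ih =>
    rw [Function.iterate_succ_apply, skewProduct, ← hγ b hb, ih (hK hb)]
    rfl

theorem dist_skewProduct_iterate_snd_le [PseudoMetricSpace β] {I : Set β} {l : ℝ≥0}
    (hK : MapsTo f K K) (hγI : ∀ b ∈ K, γ b ∈ I) (hγ : ∀ b ∈ K, γ (f b) = g b (γ b))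
    (hmaps : ∀ b ∈ K, MapsTo (g b) I I) (hlip : ∀ b ∈ K, LipschitzOnWith l (g b) I)
    (n : ℕ) {c : α} (hc : c ∈ K) {ξ : β} (hξ : ξ ∈ I) :
    dist ((skewProduct f g)^[n] (c, ξ)).2 (γ (f^[n] c)) ≤ l ^ n * dist ξ (γ c) := by
  induction n generalizing c ξ with
  | zero => simp
  | succ n ih =>
    have hstep : dist (g c ξ) (γ (f c)) ≤ l * dist ξ (γ c) := by
      rw [hγ c hc]
      exact (hlip c hc).dist_le_mul ξ hξ (γ c) (hγI c hc)
    calc dist ((skewProduct f g)^[n] (f c, g c ξ)).2 (γ (f^[n] (f c)))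
        ≤ l ^ n * dist (g c ξ) (γ (f c)) := ih (hK hc) (hmaps c hc hξ)
      _ ≤ l ^ n * (l * dist ξ (γ c)) := by gcongr
      _ = l ^ (n + 1) * dist ξ (γ c) := by ring

end SkewProduct

section SkewProductAttractor

variable {α β : Type*} [MetricSpace β] {f : α → α} {g : α → β → β} {S : Set α}
  {I : Set β} {l : ℝ≥0} {γ : α → β}

theorem iInter_skewProduct_iterate_image_eq (hf : MapsTo f S S) (hinj : InjOn f S)
    (hI : Bornology.IsBounded I) (hl : l < 1)
    (hmaps : ∀ b ∈ maximalAttractor f S, MapsTo (g b) I I)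
    (hlip : ∀ b ∈ maximalAttractor f S, LipschitzOnWith l (g b) I)
    (hγI : ∀ b ∈ maximalAttractor f S, γ b ∈ I)
    (hγ : ∀ b ∈ maximalAttractor f S, γ (f b) = g b (γ b)) :
    ⋂ k : ℕ, (skewProduct f g)^[k + 1] '' (S ×ˢ I)
      = {p : α × β | p.1 ∈ maximalAttractor f S ∧ p.2 = γ p.1} := by
  have hΛ := mapsTo_maximalAttractor hf
  ext ⟨b, x⟩
  simp only [mem_iInter, mem_ofPred_eq]
  constructor
  · intro hmem
    have hpre : ∀ k, ∃ c ∈ S, ∃ ξ ∈ I,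
        f^[k + 1] c = b ∧ ((skewProduct f g)^[k + 1] (c, ξ)).2 = x := by
      intro k
      obtain ⟨⟨c, ξ⟩, ⟨hc, hξ⟩, hcξ⟩ := hmem k
      refine ⟨c, hc, ξ, hξ, ?_, congrArg Prod.snd hcξ⟩
      simpa only [skewProduct_iterate_fst] using congrArg Prod.fst hcξ
    have hb : b ∈ maximalAttractor f S := mem_iInter.2 fun k => by
      obtain ⟨c, hc, -, -, rfl, -⟩ := hpre k
      exact ⟨f c, hf hc, rfl⟩
    refine ⟨hb, ?_⟩
    have hdist : ∀ k : ℕ, dist x (γ b) ≤ l ^ (k + 1) * diam I := by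
      intro k
      obtain ⟨c, hc, ξ, hξ, rfl, rfl⟩ := hpre k
      have hcΛ := mem_maximalAttractor_of_iterate_mem hf hinj hc hb
      calc _ ≤ l ^ (k + 1) * dist ξ (γ c) :=
            dist_skewProduct_iterate_snd_le hΛ hγI hγ hmaps hlip _ hcΛ hξ
        _ ≤ l ^ (k + 1) * diam I := by
            gcongr
            exact dist_le_diam_of_mem hI hξ (hγI c hcΛ)
    have hlim : Tendsto (fun k : ℕ => (l : ℝ) ^ (k + 1) * diam I) atTop (𝓝 0) := by
      simpa using ((tendsto_pow_atTop_nhds_zero_of_lt_one l.coe_nonneg hl).comp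
        (tendsto_add_atTop_nat 1)).mul_const (diam I)
    exact dist_le_zero.1 (ge_of_tendsto' hlim hdist)
  · rintro ⟨hb, rfl⟩ k
    obtain ⟨c, hc, rfl⟩ := (surjOn_maximalAttractor hf hinj).iterate (k + 1) hb
    exact ⟨(c, γ c), ⟨maximalAttractor_subset hc, hγI c hc⟩,
      skewProduct_iterate_graph hΛ hγ (k + 1) hc⟩

end SkewProductAttractor

section InvariantSection

variable {Y : Type*} [MetricSpace Y] [CompleteSpace Y] [LocallyCompactSpace Y]
  {I : Set Y} {l : ℝ≥0}

theorem exists_continuousMap_conj {K : Type*} [TopologicalSpace K] [CompactSpace K]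
    (H : K ≃ₜ K) {G : K → C(Y, Y)} (hG : Continuous G) (hI : IsClosed I) (hIne : I.Nonempty)
    (hl : l < 1) (hmaps : ∀ b, MapsTo (G b) I I) (hlip : ∀ b, LipschitzOnWith l (G b) I) :
    ∃ γ : C(K, Y), (∀ b, γ b ∈ I) ∧ ∀ b, γ (H b) = G b (γ b) := by
  set X : Set C(K, Y) := {γ | ∀ b, γ b ∈ I}
  have hX : IsClosed X := by
    simp only [X, ofPred_forall]
    exact isClosed_iInter fun b => hI.preimage (continuous_eval_const b)
  have : CompleteSpace X := hX.completeSpace_coe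
  obtain ⟨y, hy⟩ := hIne
  have : Nonempty X := ⟨⟨ContinuousMap.const K y, fun _ => hy⟩⟩
  let T : X → X := fun γ =>
    ⟨(⟨fun b => G b (γ.1 b), hG.eval γ.1.continuous⟩ : C(K, Y)).comp H.symm,
      fun b => hmaps _ (γ.2 _)⟩
  have hT : ContractingWith l T := by
    refine ⟨hl, LipschitzWith.of_dist_le_mul fun γ₁ γ₂ => ?_⟩
    rw [Subtype.dist_eq, ContinuousMap.dist_le (by positivity)]
    intro b
    calc _ ≤ l * dist (γ₁.1 (H.symm b)) (γ₂.1 (H.symm b)) :=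
          (hlip _).dist_le_mul _ (γ₁.2 _) _ (γ₂.2 _)
      _ ≤ l * dist γ₁ γ₂ := by
          gcongr
          exact ContinuousMap.dist_apply_le_dist _
  refine ⟨(hT.fixedPoint T).1, (hT.fixedPoint T).2, fun b => ?_⟩
  conv_lhs => rw [← hT.fixedPoint_isFixedPt]
  simp [T]

theorem exists_continuousOn_invariant_section {α : Type*} [TopologicalSpace α] [T2Space α]
    {f : α → α} {K : Set α} (hK : IsCompact K) (hf : ContinuousOn f K) (hbij : BijOn f K K)
    {g : α → C(Y, Y)} (hg : ContinuousOn g K) (hI : IsClosed I) (hIne : I.Nonempty)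
    (hl : l < 1) (hmaps : ∀ b ∈ K, MapsTo (g b) I I)
    (hlip : ∀ b ∈ K, LipschitzOnWith l (g b) I) :
    ∃ γ : α → Y, ContinuousOn γ K ∧ (∀ b ∈ K, γ b ∈ I) ∧ ∀ b ∈ K, γ (f b) = g b (γ b) := by
  have : CompactSpace K := isCompact_iff_compactSpace.mp hK
  let H : K ≃ₜ K := (hf.mapsToRestrict hbij.mapsTo).homeoOfEquivCompactToT2
    (f := hbij.equiv f)
  obtain ⟨γ, hγI, hγ⟩ := exists_continuousMap_conj H hg.domRestrict hI hIne hl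
    (fun b => hmaps b b.2) (fun b => hlip b b.2)
  obtain ⟨y, -⟩ := hIne
  have hext : ∀ b : K, Function.extend (↑) γ (fun _ => y) (b : α) = γ b :=
    Subtype.val_injective.extend_apply γ _
  refine ⟨Function.extend (↑) γ (fun _ => y), ?_, fun b hb => ?_, fun b hb => ?_⟩
  · rw [continuousOn_iff_continuous_domRestrict]
    convert γ.continuous using 1
    exact funext hext
  · simpa only [hext ⟨b, hb⟩] using hγI ⟨b, hb⟩
  · rw [hext ⟨b, hb⟩]
    exact (hext ⟨f b, hbij.mapsTo hb⟩).trans (hγ ⟨b, hb⟩)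

end InvariantSection

def ContinuousOn.graphHomeomorph {α β : Type*} [TopologicalSpace α] [TopologicalSpace β]
    {γ : α → β} {K : Set α} (hγ : ContinuousOn γ K) :
    {p : α × β | p.1 ∈ K ∧ p.2 = γ p.1} ≃ₜ K where
  toFun p := ⟨p.1.1, p.2.1⟩
  invFun b := ⟨(b, γ b), b.2, rfl⟩
  left_inv p := Subtype.ext (Prod.ext rfl p.2.2.symm)
  right_inv _ := rfl
  continuous_toFun := by fun_prop
  continuous_invFun :=
    (continuous_subtype_val.prodMk (continuousOn_iff_continuous_domRestrict.1 hγ)).subtype_mk _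

theorem IsClosedArc.isCompact {I : Set S1} (hI : IsClosedArc I) : IsCompact I := by
  obtain ⟨a, b, -, -, rfl⟩ := hI
  exact isCompact_Icc.image continuous_quotient_mk'

theorem IsClosedArc.nonempty {I : Set S1} (hI : IsClosedArc I) : I.Nonempty := by
  obtain ⟨a, b, hab, -, rfl⟩ := hI
  exact (nonempty_Icc.2 hab).image _

section Solenoid

theorem continuous_solenoidMap (lam : ℝ) : Continuous (solenoidMap lam) := by
  have : Continuous fun y : AddCircle (1 : ℝ) => (AddCircle.toCircle y : ℂ) :=
    continuous_subtype_val.comp AddCircle.continuous_toCircle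
  unfold solenoidMap
  fun_prop

theorem isCompact_solidTorus (R : ℝ) : IsCompact (solidTorus R) :=
  isCompact_univ.prod (isCompact_closedBall _ _)

variable {R lam : ℝ}

theorem mapsTo_solenoidMap (hR : 2 ≤ R) (hlam0 : 0 < lam) (hlamR : lam * R < 1) :
    MapsTo (solenoidMap lam) (solidTorus R) (solidTorus R) := by
  rintro ⟨y, z⟩ hz
  simp only [solidTorus, mem_prod, mem_univ, true_and, mem_closedBall_zero_iff] at hz ⊢
  calc ‖(AddCircle.toCircle y : ℂ) + lam * z‖ ≤ 1 + lam * ‖z‖ := by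
        simpa [abs_of_pos hlam0, Circle.norm_coe] using
          norm_add_le (AddCircle.toCircle y : ℂ) (lam * z)
    _ ≤ 1 + lam * R := by gcongr
    _ ≤ R := by linarith

theorem injOn_solenoidMap (hlam0 : 0 < lam) (hlamR : lam * R < 1) :
    InjOn (solenoidMap lam) (solidTorus R) := by
  rintro ⟨y, z⟩ hz ⟨y', z'⟩ hz' heq
  simp only [solidTorus, mem_prod, mem_univ, true_and, mem_closedBall_zero_iff] at hz hz'
  simp only [solenoidMap, Prod.mk.injEq] at heq
  obtain ⟨hy2, hz2⟩ := heq
  set u : ℂ := (AddCircle.toCircle y : ℂ)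
  set u' : ℂ := (AddCircle.toCircle y' : ℂ)
  -- `2y = 2y'` leaves `u = ± u'`, and `u = -u'` would force `2 = |u - u'| = λ|z' - z| ≤ 2λR < 2`
  have hu : u = u' := by
    have hsq : u ^ 2 = u' ^ 2 := by
      simpa [u, u', AddCircle.toCircle_add, sq] using
        congrArg (fun w => (AddCircle.toCircle w : ℂ)) hy2
    refine (sq_eq_sq_iff_eq_or_eq_neg.1 hsq).resolve_right fun hneg => ?_
    have h2 : ‖u - u'‖ = 2 := by
      rw [hneg, ← neg_add', norm_neg, ← two_mul, norm_mul, Circle.norm_coe]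
      norm_num
    have hlt : ‖u - u'‖ < 2 := by
      rw [show u - u' = lam * (z' - z) by linear_combination hz2, norm_mul, Complex.norm_real,
        Real.norm_of_nonneg hlam0.le]
      nlinarith [norm_sub_le z' z]
    exact hlt.ne h2
  have hyy : y = y' := AddCircle.injective_toCircle one_ne_zero (Circle.coe_injective hu)
  have hzz : z = z' := mul_left_cancel₀ (Complex.ofReal_ne_zero.2 hlam0.ne')
    (by linear_combination hz2 - hu)
  rw [hyy, hzz]

end Solenoid

theorem stmt_14_general (R lam : ℝ) (hR : 2 ≤ R) (hlam0 : 0 < lam)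
    (hlamR : lam * R < 1)
    (g : Base → S1 ≃ₜ S1) (I : Set S1) (hI : IsClosedArc I)
    (hcont : ContinuousOn (fun b => ((g b : C(S1, S1)))) (solidTorus R))
    (l : NNReal) (hl : (l : ℝ) < 1)
    (hmaps : ∀ b ∈ solidTorus R, MapsTo (g b) I I)
    (hlip : ∀ b ∈ solidTorus R, LipschitzOnWith l (g b) I) :
    ∃ γ : Base → S1, ContinuousOn γ (solenoidAttractor lam R) ∧
      (∀ b ∈ solenoidAttractor lam R, γ b ∈ I) ∧
      maxAttr lam R g I
        = {p : Base × S1 | p.1 ∈ solenoidAttractor lam R ∧ p.2 = γ p.1} ∧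
      (∃ e : maxAttr lam R g I ≃ₜ solenoidAttractor lam R,
        ∀ p : maxAttr lam R g I, (e p : Base) = (p : Base × S1).1) ∧
      (∀ b ∈ solenoidAttractor lam R, γ (solenoidMap lam b) = g b (γ b)) := by
  have hS := mapsTo_solenoidMap hR hlam0 hlamR
  have hinj := injOn_solenoidMap hlam0 hlamR
  have hl' : l < 1 := by exact_mod_cast hl
  have hΛS : solenoidAttractor lam R ⊆ solidTorus R := maximalAttractor_subset
  obtain ⟨γ, hγcont, hγI, hγ⟩ := exists_continuousOn_invariant_section
    ((isCompact_solidTorus R).maximalAttractor (continuous_solenoidMap lam))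
    (continuous_solenoidMap lam).continuousOn (bijOn_maximalAttractor hS hinj)
    (hcont.mono hΛS) hI.isCompact.isClosed hI.nonempty hl'
    (fun b hb => hmaps b (hΛS hb)) (fun b hb => hlip b (hΛS hb))
  have hgraph : maxAttr lam R g I
      = {p : Base × S1 | p.1 ∈ solenoidAttractor lam R ∧ p.2 = γ p.1} :=
    iInter_skewProduct_iterate_image_eq hS hinj hI.isCompact.isBounded hl'
      (fun b hb => hmaps b (hΛS hb)) (fun b hb => hlip b (hΛS hb)) hγI hγ
  exact ⟨γ, hγcont, hγI, hgraph,
    ⟨(Homeomorph.setCongr hgraph).trans hγcont.graphHomeomorph, fun _ => rfl⟩, hγ⟩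

/-- Let `h` be the solenoid map, `Λ` its maximal attractor, and
`𝒢(b,x) = (h(b), g_b(x))` a skew product whose fiber maps `g_b` are homeomorphisms of
`S¹ = ℝ/2ℤ` depending continuously on `b` (C⁰ topology), with a closed arc `I` and a
constant `l < 1` such that `g_b(I) ⊆ I` and `g_b|I` is `l`-Lipschitz for every `b ∈ B`.
Then `A* = ∩_{k≥1} 𝒢^k(B × I)` is the graph of a continuous function `γ : Λ → I`, the
projection `p(b,x) = b` restricts to a homeomorphism `A* ≃ₜ Λ`, and it conjugates `𝒢|A*`
with `h|Λ` (`γ(h(b)) = g_b(γ(b))` on `Λ`, i.e. `p ∘ 𝒢 = h ∘ p` on `A*`). -/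
theorem stmt_14 (R lam : ℝ) (hR : 2 ≤ R) (hlam0 : 0 < lam) (hlam1 : lam < 0.1)
    (hlamR : lam * R < 1)
    (g : Base → S1 ≃ₜ S1) (I : Set S1) (hI : IsClosedArc I)
    (hcont : ContinuousOn (fun b => ((g b : C(S1, S1)))) (solidTorus R))
    (l : NNReal) (hl : (l : ℝ) < 1)
    (hmaps : ∀ b ∈ solidTorus R, MapsTo (g b) I I)
    (hlip : ∀ b ∈ solidTorus R, LipschitzOnWith l (g b) I) :
    ∃ γ : Base → S1, ContinuousOn γ (solenoidAttractor lam R) ∧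
      (∀ b ∈ solenoidAttractor lam R, γ b ∈ I) ∧
      maxAttr lam R g I
        = {p : Base × S1 | p.1 ∈ solenoidAttractor lam R ∧ p.2 = γ p.1} ∧
      (∃ e : maxAttr lam R g I ≃ₜ solenoidAttractor lam R,
        ∀ p : maxAttr lam R g I, (e p : Base) = (p : Base × S1).1) ∧
      (∀ b ∈ solenoidAttractor lam R, γ (solenoidMap lam b) = g b (γ b)) :=
  stmt_14_general R lam hR hlam0 hlamR g I hI hcont l hl hmaps hlip
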